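/- arXiv:2310.00864 — 2 statements merged into one kernel-verified Lean document; each statement's English description precedes it below -/
import Mathlib

section
/- For every integer K ≥ 1, the generalized ψ-loss is Lipschitz continuous with constant 1 with respect to the supremum norm on ℝ^K: for all z, z' ∈ ℝ^K, |ψ(z) − ψ(z')| ≤ max_{1≤k≤K} |z_k − z'_k|. -/
/-- `Tgen s z = max (s - z 1, ..., s - z K, 0)`, the function `T_s` from the paper. -/
noncomputable def Tgen {K : ℕ} (s : ℝ) (z : Fin K → ℝ) : ℝ :=
  Finset.fold (· ⊔ ·) 0 (fun k => s - z k) Finset.univ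

/-- The generalized ψ-loss: `ψ z = T₁ z - T₀ z`. -/
noncomputable def psiLoss {K : ℕ} (z : Fin K → ℝ) : ℝ :=
  Tgen 1 z - Tgen 0 z

/-!
Writing `m = min_k z_k`, one has `T_s z = max (s - m) 0`, hence `ψ z = min (max (1 - m) 0) 1` is
`1 - m` clamped to `[0, 1]`. Clamping is 1-Lipschitz, and `z ↦ min_k z_k` is 1-Lipschitz for the
sup norm.
-/

section

variable {ι α : Type*} [AddCommGroup α] [LinearOrder α] [IsOrderedAddMonoid α]

theorem Finset.fold_max_const_sub {s : Finset ι} (hs : s.Nonempty) (f : ι → α) (a b : α) :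
    s.fold max b (fun i => a - f i) = max (a - s.inf' hs f) b := by
  refine le_antisymm ((Finset.fold_max_le _).2 ⟨le_max_right _ _, fun i hi => ?_⟩) (max_le ?_ ?_)
  · exact le_max_of_le_left (sub_le_sub_left (Finset.inf'_le f hi) a)
  · obtain ⟨i, hi, hmin⟩ := Finset.exists_mem_eq_inf' hs f
    exact (Finset.le_fold_max _).2 (Or.inr ⟨i, hi, hmin ▸ le_rfl⟩)
  · exact (Finset.le_fold_max _).2 (Or.inl le_rfl)

theorem Finset.inf'_sub_inf'_le {s : Finset ι} (hs : s.Nonempty) (f g : ι → α) :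
    s.inf' hs f - s.inf' hs g ≤ s.sup' hs (fun i => |f i - g i|) := by
  refine sub_le_comm.1 (Finset.le_inf' hs g fun i hi => ?_)
  calc s.inf' hs f - s.sup' hs (fun i => |f i - g i|) ≤ f i - |f i - g i| :=
        sub_le_sub (Finset.inf'_le f hi) (Finset.le_sup' (fun i => |f i - g i|) hi)
    _ ≤ g i := sub_le_comm.1 (le_abs_self _)

theorem Finset.abs_inf'_sub_inf'_le {s : Finset ι} (hs : s.Nonempty) (f g : ι → α) :
    |s.inf' hs f - s.inf' hs g| ≤ s.sup' hs (fun i => |f i - g i|) := by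
  refine abs_sub_le_iff.2 ⟨Finset.inf'_sub_inf'_le hs f g, ?_⟩
  simpa only [abs_sub_comm] using Finset.inf'_sub_inf'_le hs g f

theorem max_sub_sub_max_sub_eq_min {a b m : α} (hba : b ≤ a) :
    max (a - m) 0 - max (b - m) 0 = min (max (a - m) 0) (a - b) := by
  grind

theorem abs_min_max_sub_le (x y c : α) :
    |min (max x 0) c - min (max y 0) c| ≤ |x - y| :=
  calc |min (max x 0) c - min (max y 0) c| ≤ |max x 0 - max y 0| := by
        simpa using abs_min_sub_min_le_max (max x 0) c (max y 0) c
    _ ≤ |x - y| := abs_max_sub_max_le_abs x y 0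

end

section

variable {K : ℕ} (hK : (Finset.univ : Finset (Fin K)).Nonempty)
include hK

theorem Tgen_eq_max (s : ℝ) (z : Fin K → ℝ) :
    Tgen s z = max (s - Finset.univ.inf' hK z) 0 :=
  Finset.fold_max_const_sub hK z s 0

theorem psiLoss_eq_min_max (z : Fin K → ℝ) :
    psiLoss z = min (max (1 - Finset.univ.inf' hK z) 0) 1 := by
  rw [psiLoss, Tgen_eq_max hK, Tgen_eq_max hK, max_sub_sub_max_sub_eq_min zero_le_one, sub_zero]

theorem abs_psiLoss_sub_le (z z' : Fin K → ℝ) :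
    |psiLoss z - psiLoss z'| ≤ |Finset.univ.inf' hK z - Finset.univ.inf' hK z'| := by
  rw [psiLoss_eq_min_max hK, psiLoss_eq_min_max hK]
  refine (abs_min_max_sub_le _ _ _).trans_eq ?_
  rw [sub_sub_sub_cancel_left, abs_sub_comm]

end

theorem stmt4 (K : ℕ) (hK : 1 ≤ K) (z z' : Fin K → ℝ) :
    |psiLoss z - psiLoss z'|
      ≤ Finset.univ.sup'
          (⟨⟨0, hK⟩, Finset.mem_univ _⟩ : (Finset.univ : Finset (Fin K)).Nonempty)
          (fun k => |z k - z' k|) :=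
  (abs_psiLoss_sub_le _ z z').trans (Finset.abs_inf'_sub_inf'_le _ z z')
end

section
/- Let K ≥ 1 be an integer, w : {−1,1}^K → ℝ, and z ∈ ℝ^K with z_k ≠ 0 for all k. Let a* be the unique element of {−1,1}^K with a*_k z_k > 0 for all k. Then Σ_{a ∈ {−1,1}^K} w(a) ψ(a ⊙ z) = Σ_{a ∈ {−1,1}^K} w(a) + w(a*)·(ψ(a* ⊙ z) − 1). -/
open scoped Classical in
/-- The set of sign vectors `{-1, 1}^K`, as a finset of `Fin K → ℝ`. -/
noncomputable def signVecs (K : ℕ) : Finset (Fin K → ℝ) :=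
  Finset.image (fun (b : Fin K → Bool) (k : Fin K) => if b k then (1 : ℝ) else -1)
    Finset.univ

lemma mem_signVecs {K : ℕ} (a : Fin K → ℝ) :
    a ∈ signVecs K ↔ ∀ k, a k = 1 ∨ a k = -1 := by
  classical
  unfold signVecs
  constructor
  · intro h k
    rw [Finset.mem_image] at h
    obtain ⟨b, -, rfl⟩ := h
    by_cases hb : b k <;> simp [hb]
  · intro h
    rw [Finset.mem_image]
    refine ⟨fun k => decide (a k = 1), Finset.mem_univ _, ?_⟩
    funext k
    rcases h k with h1 | h1 <;> norm_num [h1]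

lemma signVecs_nonempty (K : ℕ) : (signVecs K).Nonempty :=
  ⟨fun _ => 1, (mem_signVecs _).mpr fun _ => Or.inl rfl⟩

lemma Tgen_le_iff {K : ℕ} {s c : ℝ} {z : Fin K → ℝ} :
    Tgen s z ≤ c ↔ 0 ≤ c ∧ ∀ k, s - z k ≤ c :=
  (Finset.fold_max_le c).trans (by simp)

lemma le_Tgen {K : ℕ} (s : ℝ) (z : Fin K → ℝ) (k : Fin K) : s - z k ≤ Tgen s z :=
  (Tgen_le_iff.mp le_rfl).2 k

lemma Tgen_nonneg {K : ℕ} (s : ℝ) (z : Fin K → ℝ) : 0 ≤ Tgen s z :=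
  (Tgen_le_iff.mp le_rfl).1

/-- Once some coordinate lies below `s`, the clamp at `0` is inactive from `s` on, so `T_t` is
`T_s` shifted by `t - s`. -/
lemma Tgen_eq_add_of_lt {K : ℕ} {s t : ℝ} (hst : s ≤ t) {z : Fin K → ℝ} {k : Fin K}
    (hk : z k < s) : Tgen t z = Tgen s z + (t - s) := by
  apply le_antisymm
  · refine Tgen_le_iff.mpr ⟨by linarith [Tgen_nonneg s z], fun j => ?_⟩
    linarith [le_Tgen s z j]
  · suffices Tgen s z ≤ Tgen t z - (t - s) by linarith
    refine Tgen_le_iff.mpr ⟨by linarith [le_Tgen t z k], fun j => ?_⟩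
    linarith [le_Tgen t z j]

lemma psiLoss_eq_one_of_neg {K : ℕ} {z : Fin K → ℝ} {k : Fin K} (hk : z k < 0) :
    psiLoss z = 1 := by
  rw [psiLoss, Tgen_eq_add_of_lt zero_le_one hk]
  ring

lemma exists_eq_neg_of_mem_signVecs {K : ℕ} {a b : Fin K → ℝ} (ha : a ∈ signVecs K)
    (hb : b ∈ signVecs K) (hab : a ≠ b) : ∃ k, a k = -b k := by
  obtain ⟨k, hk⟩ := Function.ne_iff.mp hab
  refine ⟨k, ?_⟩
  rcases (mem_signVecs a).mp ha k with h | h <;> rcases (mem_signVecs b).mp hb k with h' | h' <;>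
    simp_all

lemma psiLoss_signVec_mul_eq_one {K : ℕ} {z a astar : Fin K → ℝ} (ha : a ∈ signVecs K)
    (hmem : astar ∈ signVecs K) (hstar : ∀ k, 0 < astar k * z k) (hne : a ≠ astar) :
    psiLoss (fun k => a k * z k) = 1 := by
  obtain ⟨k, hk⟩ := exists_eq_neg_of_mem_signVecs ha hmem hne
  refine psiLoss_eq_one_of_neg (k := k) ?_
  simp only [hk, neg_mul, neg_lt_zero]
  exact hstar k

theorem stmt8_general (K : ℕ) (w : (Fin K → ℝ) → ℝ) (z : Fin K → ℝ)
    (astar : Fin K → ℝ) (hmem : astar ∈ signVecs K)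
    (hstar : ∀ k, 0 < astar k * z k) :
    ∑ a ∈ signVecs K, w a * psiLoss (fun k => a k * z k)
      = (∑ a ∈ signVecs K, w a)
        + w astar * (psiLoss (fun k => astar k * z k) - 1) := by
  have hcorrection : ∑ a ∈ signVecs K, w a * (psiLoss (fun k => a k * z k) - 1)
      = w astar * (psiLoss (fun k => astar k * z k) - 1) :=
    Finset.sum_eq_single_of_mem astar hmem fun a ha hne => by
      rw [psiLoss_signVec_mul_eq_one ha hmem hstar hne, sub_self, mul_zero]
  rw [← hcorrection, ← Finset.sum_add_distrib]
  exact Finset.sum_congr rfl fun a _ => by ring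

theorem stmt8 (K : ℕ) (hK : 1 ≤ K) (w : (Fin K → ℝ) → ℝ) (z : Fin K → ℝ)
    (hz : ∀ k, z k ≠ 0) (astar : Fin K → ℝ) (hmem : astar ∈ signVecs K)
    (hstar : ∀ k, 0 < astar k * z k) :
    ∑ a ∈ signVecs K, w a * psiLoss (fun k => a k * z k)
      = (∑ a ∈ signVecs K, w a)
        + w astar * (psiLoss (fun k => astar k * z k) - 1) :=
  stmt8_general K w z astar hmem hstar
end
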